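/- arXiv:1205.1840 — 2 statements merged into one kernel-verified Lean document; each statement's English description precedes it below -/
import Mathlib

section
/- Let $1 \le k \le n$ and let $A$ be a Hermitian $n\times n$ complex matrix belonging to the G\u00e5rding cone $\Gamma_k^+$. Then the Newton transformation $T_{k-1}(A)$ is positive definite. -/
open Matrix
open scoped ComplexOrder

/-- The `k`-th elementary symmetric function of a finite family of reals. -/
noncomputable def esymmR {ι : Type*} [Fintype ι] (k : ℕ) (lam : ι → ℝ) : ℝ :=
  ∑ s ∈ Finset.univ.powersetCard k, ∏ i ∈ s, lam i

/-- `σ_k(A)`: the `k`-th elementary symmetric function of the (real) eigenvalues of a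
Hermitian matrix `A`. -/
noncomputable def sigmaH {n : ℕ} {A : Matrix (Fin n) (Fin n) ℂ}
    (hA : A.IsHermitian) (k : ℕ) : ℝ :=
  esymmR k hA.eigenvalues

/-- `T_k(A)`: the `k`-th Newton transformation of a Hermitian matrix `A`,
`T_k(A) = ∑_{j=0}^k (-1)^j σ_{k-j}(A) A^j`. -/
noncomputable def newtonH {n : ℕ} {A : Matrix (Fin n) (Fin n) ℂ}
    (hA : A.IsHermitian) (k : ℕ) : Matrix (Fin n) (Fin n) ℂ :=
  ∑ j ∈ Finset.range (k + 1), ((-1 : ℂ) ^ j * (sigmaH hA (k - j) : ℂ)) • A ^ j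

/-!
Diagonalising `A`, the matrix `T_{k-1}(A)` acts on the eigenvector of `λᵢ` by
`∑ⱼ (-1)^j σ_{k-1-j}(λ) λᵢ^j`, which telescopes to `σ_{k-1}(λ ∖ λᵢ)`. So it suffices that
`λ ∈ Γₖ` forces `λ ∖ λᵢ ∈ Γ_{k-1}`.

This goes by induction on `k`, using the weak Newton inequality "`eₘ > 0` and `e_{m+1} = 0`
imply `e_{m+2} ≤ 0`": if `eₖ(μ) > 0` but `e_{k+1}(μ) ≤ 0`, lowering `x` in `x ::ₘ μ` to the
`t ≥ 0` with `e_{k+1}(t ::ₘ μ) = 0` yields `e_{k+2}(t ::ₘ μ) ≤ 0`, contradicting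
`e_{k+2}(x ::ₘ μ) > 0`. Passing to the roots of derivatives reduces the Newton inequality to
`m + 2` variables, where for the reciprocals `ρ` it is `e₁(ρ)² - 2 e₂(ρ) = ∑ ρ² ≥ 0`.
-/

namespace Multiset

section CommSemiring

variable {R : Type*} [CommSemiring R]

theorem esymm_zero (s : Multiset R) : s.esymm 0 = 1 := by
  simp [esymm, powersetCard_zero_left]

theorem esymm_cons_succ (x : R) (s : Multiset R) (j : ℕ) :
    (x ::ₘ s).esymm (j + 1) = s.esymm (j + 1) + x * s.esymm j := by
  simp only [esymm, powersetCard_cons, map_add, sum_add, map_map, Function.comp_def, prod_cons,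
    sum_map_mul_left]

theorem esymm_eq_zero_of_card_lt {s : Multiset R} {j : ℕ} (h : card s < j) : s.esymm j = 0 := by
  simp [esymm, powersetCard_eq_empty _ h]

theorem le_card_of_esymm_ne_zero {s : Multiset R} {j : ℕ} (h : s.esymm j ≠ 0) : j ≤ card s :=
  le_of_not_gt fun hlt => h (esymm_eq_zero_of_card_lt hlt)

theorem esymm_card (s : Multiset R) : s.esymm (card s) = s.prod := by
  induction s using Multiset.induction with
  | empty => simp [esymm_zero]
  | cons x s ih => simp [esymm_cons_succ, esymm_eq_zero_of_card_lt, ih]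

theorem esymm_one (s : Multiset R) : s.esymm 1 = s.sum := by
  simp [esymm, powersetCard_one]

theorem sq_sum_eq_sum_sq_add_two_mul_esymm_two (s : Multiset R) :
    s.sum ^ 2 = (s.map (· ^ 2)).sum + 2 * s.esymm 2 := by
  induction s using Multiset.induction with
  | empty => simp [esymm_eq_zero_of_card_lt (s := (0 : Multiset R)) (j := 2) (by simp)]
  | cons x s ih =>
    rw [sum_cons, map_cons, sum_cons, esymm_cons_succ, esymm_one, sq, sq, add_mul, mul_add,
      mul_add, ← sq, ← sq, ih]
    ring

end CommSemiring

theorem esymm_eq_sum_esymm_cons_mul_pow {R : Type*} [CommRing R] (x : R) (s : Multiset R)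
    (m : ℕ) :
    s.esymm m = ∑ j ∈ Finset.range (m + 1), (-1) ^ j * (x ::ₘ s).esymm (m - j) * x ^ j := by
  induction m with
  | zero => simp [esymm_zero]
  | succ m ih =>
    have hshift : ∑ j ∈ Finset.range (m + 1),
        (-1) ^ (j + 1) * (x ::ₘ s).esymm (m + 1 - (j + 1)) * x ^ (j + 1) = -(x * s.esymm m) := by
      rw [ih, Finset.mul_sum, ← Finset.sum_neg_distrib]
      refine Finset.sum_congr rfl fun j _ => ?_
      rw [Nat.add_sub_add_right]
      ring
    rw [Finset.sum_range_succ', hshift, Nat.sub_zero, esymm_cons_succ]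
    ring

theorem esymm_map_inv_mul_prod {K : Type*} [Field K] {s : Multiset K} (h0 : (0 : K) ∉ s)
    {i j : ℕ} (hij : i + j = card s) : (s.map (·⁻¹)).esymm j * s.prod = s.esymm i := by
  induction s using Multiset.induction generalizing i j with
  | empty =>
    obtain ⟨rfl, rfl⟩ : i = 0 ∧ j = 0 := by simpa using hij
    simp [esymm_zero]
  | cons x s ih =>
    have hx : x ≠ 0 := fun h => h0 (h ▸ mem_cons_self x s)
    have h0s : (0 : K) ∉ s := fun h => h0 (mem_cons_of_mem h)
    rw [card_cons] at hij
    rcases j with _ | j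
    · obtain rfl : i = card s + 1 := by omega
      rw [esymm_zero, one_mul, ← card_cons x s, esymm_card]
    · rw [map_cons, esymm_cons_succ, prod_cons, add_mul,
        show x⁻¹ * (s.map (·⁻¹)).esymm j * (x * s.prod) = (s.map (·⁻¹)).esymm j * s.prod by
          field_simp]
      rcases i with _ | i
      · rw [esymm_eq_zero_of_card_lt (by simp; omega), zero_mul, zero_add, ih h0s (i := 0)
          (by omega), esymm_zero, esymm_zero]
      · rw [mul_left_comm, ih h0s (i := i) (by omega), ih h0s (i := i + 1) (by omega),
          esymm_cons_succ, add_comm]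

theorem two_mul_esymm_mul_prod_le_sq {s : Multiset ℝ} {m : ℕ} (hs : card s = m + 2) :
    2 * s.esymm m * s.prod ≤ s.esymm (m + 1) ^ 2 := by
  by_cases h0 : (0 : ℝ) ∈ s
  · rw [prod_eq_zero h0, mul_zero]
    positivity
  set ρ := s.map (·⁻¹)
  have h1 : ρ.sum * s.prod = s.esymm (m + 1) := by
    rw [← esymm_one, esymm_map_inv_mul_prod h0 (i := m + 1) (by omega)]
  have h2 : ρ.esymm 2 * s.prod = s.esymm m := esymm_map_inv_mul_prod h0 (by omega)
  have hsq : 0 ≤ (ρ.map (· ^ 2)).sum := sum_nonneg fun _ hx => by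
    obtain ⟨y, -, rfl⟩ := mem_map.mp hx
    positivity
  rw [← h1, ← h2]
  nlinarith [sq_sum_eq_sum_sq_add_two_mul_esymm_two ρ, sq_nonneg s.prod]

open Polynomial in
/-- `t` is the multiset of roots of the derivative of `∏ (X - a)`, which splits by Rolle. -/
theorem exists_esymm_roots_derivative (s : Multiset ℝ) :
    ∃ t : Multiset ℝ, card t = card s - 1 ∧
      ∀ j < card s, (card s : ℝ) * t.esymm j = ((card s - j : ℕ) : ℝ) * s.esymm j := by
  set p := (s.map fun a => X - C a).prod
  have hp_deg : p.natDegree = card s := natDegree_multiset_prod_X_sub_C_eq_card s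
  have hp_roots : p.roots = s := roots_multiset_prod_X_sub_C s
  have hp_lc : p.leadingCoeff = 1 := monic_multisetProd_X_sub_C s
  have hq_deg : p.derivative.natDegree = card s - 1 := by rw [natDegree_derivative, hp_deg]
  have hq_card : card p.derivative.roots = card s - 1 := by
    have := card_roots_le_derivative p
    have := card_roots' p.derivative
    rw [hp_roots] at *
    omega
  refine ⟨p.derivative.roots, hq_card, fun j hj => ?_⟩
  have hcoeff := coeff_derivative p (card s - 1 - j)
  rw [coeff_eq_esymm_roots_of_card (hq_card.trans hq_deg.symm) (by omega),
    coeff_eq_esymm_roots_of_card (by rw [hp_roots, hp_deg]) (by omega), hp_roots,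
    leadingCoeff_derivative, hp_lc, hp_deg, hq_deg,
    show card s - 1 - (card s - 1 - j) = j by omega,
    show card s - (card s - 1 - j + 1) = j by omega] at hcoeff
  have hcast : ((card s - 1 - j : ℕ) : ℝ) + 1 = ((card s - j : ℕ) : ℝ) := by
    norm_cast
    omega
  rw [hcast] at hcoeff
  have hsign : (-1 : ℝ) ^ j ≠ 0 := pow_ne_zero j (by norm_num)
  apply mul_left_cancel₀ hsign
  linear_combination hcoeff

theorem esymm_add_two_nonpos {s : Multiset ℝ} {m : ℕ} (hm : m + 2 ≤ card s)
    (hpos : 0 < s.esymm m) (hzero : s.esymm (m + 1) = 0) : s.esymm (m + 2) ≤ 0 := by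
  obtain ⟨d, hd⟩ := Nat.exists_eq_add_of_le hm
  induction d generalizing s with
  | zero =>
    have := two_mul_esymm_mul_prod_le_sq hd
    rw [hzero, ← esymm_card, hd] at this
    nlinarith
  | succ d ih =>
    obtain ⟨t, ht, hts⟩ := exists_esymm_roots_derivative s
    have hc : (0 : ℝ) < card s := by exact_mod_cast (show 0 < card s by omega)
    have hcj (j : ℕ) (hj : j ≤ m + 2) : (0 : ℝ) < ((card s - j : ℕ) : ℝ) := by
      exact_mod_cast (show 0 < card s - j by omega)
    have htm : 0 < t.esymm m := by
      have := hts m (by omega)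
      nlinarith [mul_pos (hcj m (by omega)) hpos]
    have htm1 : t.esymm (m + 1) = 0 := by
      have := hts (m + 1) (by omega)
      rw [hzero, mul_zero] at this
      exact (mul_eq_zero.mp this).resolve_left hc.ne'
    have htm2 := ih (by omega) htm htm1 (by omega)
    nlinarith [hts (m + 2) (by omega), hcj (m + 2) le_rfl]

end Multiset

open Multiset

def gardingCone (k : ℕ) : Set (Multiset ℝ) := {s | ∀ j ≤ k, 0 < s.esymm j}

theorem esymm_succ_pos_of_cons_mem_gardingCone {x : ℝ} {s : Multiset ℝ} {k : ℕ}
    (hs : s ∈ gardingCone k) (hxs : x ::ₘ s ∈ gardingCone (k + 2)) : 0 < s.esymm (k + 1) := by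
  by_contra! hb
  set a := s.esymm k
  set b := s.esymm (k + 1)
  have ha : 0 < a := hs k le_rfl
  set t := -b / a
  have ht : 0 ≤ t := div_nonneg (neg_nonneg.mpr hb) ha.le
  have hta : t * a = -b := div_mul_cancel₀ _ ha.ne'
  have hxt : t < x := by
    have := hxs (k + 1) (by omega)
    rw [esymm_cons_succ] at this
    nlinarith
  have hcard : k + 2 ≤ card (t ::ₘ s) := by
    simpa using le_card_of_esymm_ne_zero (hxs (k + 2) le_rfl).ne'
  have hk : 0 < (t ::ₘ s).esymm k := by
    rcases k with _ | k
    · simp [esymm_zero]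
    · rw [esymm_cons_succ]
      nlinarith [hs k (by omega)]
  have hk1 : (t ::ₘ s).esymm (k + 1) = 0 := by
    rw [esymm_cons_succ]
    linarith
  have hk2 := esymm_add_two_nonpos hcard hk hk1
  have hx2 := hxs (k + 2) le_rfl
  rw [esymm_cons_succ] at hk2 hx2
  nlinarith

theorem mem_gardingCone_of_cons_mem {x : ℝ} {s : Multiset ℝ} {k : ℕ}
    (h : x ::ₘ s ∈ gardingCone (k + 1)) : s ∈ gardingCone k := by
  induction k with
  | zero =>
    intro j hj
    simp [Nat.le_zero.mp hj, esymm_zero]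
  | succ k ih =>
    have hs := ih fun j hj => h j (by omega)
    intro j hj
    rcases Nat.lt_or_eq_of_le hj with hj | rfl
    · exact hs j (by omega)
    · exact esymm_succ_pos_of_cons_mem_gardingCone hs h

theorem newtonH_eq_cfc {n : ℕ} {A : Matrix (Fin n) (Fin n) ℂ} (hA : A.IsHermitian) (k : ℕ) :
    newtonH hA k = cfc (fun x : ℝ => ∑ j ∈ Finset.range (k + 1),
      (-1) ^ j * sigmaH hA (k - j) * x ^ j) A := by
  rw [← Finset.sum_fn, cfc_sum _ _ _ (fun _ _ => by fun_prop), newtonH]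
  refine Finset.sum_congr rfl fun j _ => ?_
  rw [cfc_const_mul _ _ _, cfc_pow_id _ _ hA.isSelfAdjoint]
  norm_cast

open scoped MatrixOrder in
theorem Matrix.IsHermitian.posDef_cfc {𝕜 n : Type*} [RCLike 𝕜] [Fintype n] [DecidableEq n]
    {A : Matrix n n 𝕜} (hA : A.IsHermitian) {f : ℝ → ℝ} (hf : ∀ i, 0 < f (hA.eigenvalues i)) :
    (cfc f A).PosDef := by
  rw [← isStrictlyPositive_iff_posDef, cfc_isStrictlyPositive_iff f A
    (hA.spectrum_real_eq_range_eigenvalues ▸ (Set.finite_range _).continuousOn f)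
    hA.isSelfAdjoint, hA.spectrum_real_eq_range_eigenvalues]
  rintro _ ⟨i, rfl⟩
  exact hf i

theorem newtonH_posDef_general {n : ℕ} (k : ℕ) (hk1 : 1 ≤ k)
    (A : Matrix (Fin n) (Fin n) ℂ) (hA : A.IsHermitian)
    (hAk : ∀ j, 1 ≤ j → j ≤ k → 0 < sigmaH hA j) :
    (newtonH hA (k - 1)).PosDef := by
  set Λ := Finset.univ.val.map hA.eigenvalues
  have hσ (j : ℕ) : sigmaH hA j = Λ.esymm j := by
    rw [Finset.esymm_map_val]
    rfl
  have hΛ : Λ ∈ gardingCone (k - 1 + 1) := by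
    rintro (_ | j) hj
    · simp [esymm_zero]
    · exact hσ _ ▸ hAk _ (by omega) (by omega)
  rw [newtonH_eq_cfc]
  refine hA.posDef_cfc fun i => ?_
  have hcons : hA.eigenvalues i ::ₘ Λ.erase (hA.eigenvalues i) = Λ :=
    cons_erase (mem_map_of_mem _ (Finset.mem_univ i))
  simp only [hσ]
  rw [← hcons, ← esymm_eq_sum_esymm_cons_mul_pow]
  exact mem_gardingCone_of_cons_mem (hcons ▸ hΛ) _ le_rfl

/-- If a Hermitian matrix `A` belongs to the Gårding cone `Γ_k^+` with `1 ≤ k ≤ n`,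
then the Newton transformation `T_{k-1}(A)` is positive definite. -/
theorem newtonH_posDef {n : ℕ} (k : ℕ) (hk1 : 1 ≤ k) (hk : k ≤ n)
    (A : Matrix (Fin n) (Fin n) ℂ) (hA : A.IsHermitian)
    (hAk : ∀ j, 1 ≤ j → j ≤ k → 0 < sigmaH hA j) :
    (newtonH hA (k - 1)).PosDef :=
  newtonH_posDef_general k hk1 A hA hAk
end

section
/- Let $1 \le k \le n-1$ and let $A$ be a Hermitian $n\times n$ complex matrix belonging to the G\u00e5rding cone $\Gamma_k^+$. Then $\sigma_{k+1}(A) \ \le\ \frac{n-k}{n(k+1)}\, \sigma_k(A)\, \sigma_1(A).$ -/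
/-!
For the normalized means `E_i = σ_i / C(n, i)` of `n` real numbers, Newton's inequalities
`E_j E_{j+2} ≤ E_{j+1}²` hold: replacing the numbers by the roots of the derivative of
`∏ (X - λ_i)`, which are real by Rolle's theorem, keeps `E_0, …, E_{n-1}` and lowers `n` by one,
so it suffices to treat `n = j + 2`, where it is Cauchy–Schwarz for the products `∏_{l ≠ i} λ_l`.
In `Γ_k^+` the means `E_0 = 1, E_1, …, E_k` are positive, so log-concavity makes `E_{i+1} / E_i`
non-increasing for `i ≤ k` and `E_{k+1} ≤ E_1 E_k`. This is the claim, as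
`C(n, k+1) / C(n, k) = (n - k) / (k + 1)`.
-/

open Matrix

open Finset Polynomial

lemma mul_succ_le_mul_of_mul_le_sq {p : ℕ → ℝ} {k : ℕ} (hpos : ∀ j ≤ k, 0 < p j)
    (hp : ∀ j < k, p j * p (j + 2) ≤ p (j + 1) ^ 2) : p 0 * p (k + 1) ≤ p 1 * p k := by
  induction k with
  | zero => exact (mul_comm _ _).le
  | succ k ih =>
    have ih := ih (fun j hj => hpos j (by omega)) (fun j hj => hp j (by omega))
    have hk := hpos k (by omega)
    refine le_of_mul_le_mul_left ?_ hk
    calc p k * (p 0 * p (k + 2)) = p 0 * (p k * p (k + 2)) := by ring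
      _ ≤ p 0 * p (k + 1) ^ 2 :=
        mul_le_mul_of_nonneg_left (hp k (by omega)) (hpos 0 (by omega)).le
      _ = p (k + 1) * (p 0 * p (k + 1)) := by ring
      _ ≤ p (k + 1) * (p 1 * p k) := mul_le_mul_of_nonneg_left ih (hpos (k + 1) le_rfl).le
      _ = p k * (p 1 * p (k + 1)) := by ring

lemma Finset.sum_powersetCard_compl {ι M : Type*} [Fintype ι] [DecidableEq ι] [AddCommMonoid M]
    {k m : ℕ} (h : k + m = Fintype.card ι) (F : Finset ι → M) :
    ∑ t ∈ univ.powersetCard k, F t = ∑ t ∈ univ.powersetCard m, F tᶜ := by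
  refine sum_nbij' compl compl (fun t ht => ?_) (fun t ht => ?_) (fun t _ => compl_compl t)
    (fun t _ => compl_compl t) (fun t _ => by rw [compl_compl])
  all_goals
    simp only [mem_powersetCard_univ, card_compl] at ht ⊢
    omega

lemma Finset.sq_sum_eq_sum_sq_add_two_mul_sum_pairs {ι R : Type*} [DecidableEq ι] [CommRing R]
    (s : Finset ι) (f : ι → R) :
    (∑ i ∈ s, f i) ^ 2 = ∑ i ∈ s, f i ^ 2 + 2 * ∑ t ∈ s.powersetCard 2, ∏ i ∈ t, f i := by
  induction s using Finset.induction with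
  | empty => simp [powersetCard_eq_empty.2 (card_empty.trans_lt two_pos)]
  | @insert a s ha ih =>
    have hpairs : ∑ t ∈ (insert a s).powersetCard 2, ∏ i ∈ t, f i
        = ∑ t ∈ s.powersetCard 2, ∏ i ∈ t, f i + f a * ∑ i ∈ s, f i := by
      rw [powersetCard_succ_insert ha, sum_union, sum_image, powersetCard_one, sum_map, mul_sum]
      · refine congrArg _ (sum_congr rfl fun i hi => ?_)
        have hai : a ∉ ({i} : Finset ι) := by simpa using (ne_of_mem_of_not_mem hi ha).symm
        rw [Function.Embedding.coeFn_mk, prod_insert hai, prod_singleton]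
      · exact insert_erase_invOn.2.injOn.mono fun t ht hat =>
          ha ((mem_powersetCard.1 ht).1 hat)
      · refine disjoint_left.2 fun t ht htu => ?_
        obtain ⟨u, -, rfl⟩ := mem_image.1 htu
        exact ha ((mem_powersetCard.1 ht).1 (mem_insert_self a u))
    rw [sum_insert ha, sum_insert ha, hpairs]
    linear_combination ih

/-- With `c i = ∏_{j ≠ i} f j` one has `e_{m+1}(f) = ∑ c i` and `e_m(f) e_{m+2}(f) = e_2(c)`,
so this is Cauchy–Schwarz for the `c i`. -/
lemma Fintype.two_mul_card_mul_esymm_mul_esymm_le {ι : Type*} [Fintype ι] [DecidableEq ι]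
    {m : ℕ} (hcard : Fintype.card ι = m + 2) (f : ι → ℝ) :
    2 * (m + 2) * ((univ.val.map f).esymm m * (univ.val.map f).esymm (m + 2)) ≤
      (m + 1) * (univ.val.map f).esymm (m + 1) ^ 2 := by
  simp only [esymm_map_val]
  set c : ι → ℝ := fun i => ∏ j ∈ {i}ᶜ, f j
  have hpair : ∀ t ∈ univ.powersetCard 2, (∏ i ∈ tᶜ, f i) * ∏ i, f i = ∏ i ∈ t, c i := by
    intro t ht
    obtain ⟨x, y, hxy, rfl⟩ := card_eq_two.1 (mem_powersetCard_univ.1 ht)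
    have hc : ∀ a b, a ≠ b → c a = (∏ i ∈ {a, b}ᶜ, f i) * f b := fun a b hab => by
      have hb : b ∈ ({a}ᶜ : Finset ι) := by simpa using hab.symm
      show ∏ j ∈ {a}ᶜ, f j = _
      rw [← prod_erase_mul _ _ hb]
      congr 2
      ext z
      simp [and_comm]
    rw [← prod_compl_mul_prod {x, y} f, prod_pair hxy, prod_pair hxy, hc x y hxy, hc y x hxy.symm,
      pair_comm]
    ring
  have hsum : ∑ t ∈ univ.powersetCard (m + 1), ∏ i ∈ t, f i = ∑ i, c i := by
    rw [sum_powersetCard_compl (m := 1) (by omega), powersetCard_one, sum_map]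
    rfl
  have hpairs : (∑ t ∈ univ.powersetCard m, ∏ i ∈ t, f i) * ∏ i, f i =
      ∑ t ∈ univ.powersetCard 2, ∏ i ∈ t, c i := by
    rw [sum_powersetCard_compl (m := 2) (by omega), sum_mul]
    exact Finset.sum_congr rfl hpair
  have hcs : (∑ i, c i) ^ 2 ≤ (m + 2) * ∑ i, c i ^ 2 := by
    simpa [hcard] using sq_sum_le_card_mul_sum_sq (s := univ) (f := c)
  rw [← hcard, ← card_univ, powersetCard_self, sum_singleton, hsum, hpairs]
  nlinarith [sq_sum_eq_sum_sq_add_two_mul_sum_pairs univ c]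

lemma Multiset.exists_map_univ_val_eq {α : Type*} (s : Multiset α) :
    ∃ f : Fin (Multiset.card s) → α, univ.val.map f = s := by
  obtain ⟨l, rfl⟩ := Quot.exists_rep s
  exact ⟨l.get, by erw [Fin.univ_val_map, List.ofFn_get]; rfl⟩

namespace Multiset

noncomputable def esymmMean (s : Multiset ℝ) (i : ℕ) : ℝ :=
  s.esymm i / (card s).choose i

lemma esymmMean_zero (s : Multiset ℝ) : s.esymmMean 0 = 1 := by
  simp [esymmMean, esymm]

noncomputable def derivativeRoots (s : Multiset ℝ) : Multiset ℝ :=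
  (derivative (s.map (X - C ·)).prod).roots

/-- By Rolle's theorem the derivative of a real polynomial with only real roots has only real
roots. -/
lemma card_derivativeRoots (s : Multiset ℝ) : card s.derivativeRoots = card s - 1 := by
  have hdeg : (derivative (s.map (X - C ·)).prod).natDegree = card s - 1 := by
    rw [natDegree_derivative, natDegree_multiset_prod_X_sub_C_eq_card]
  refine le_antisymm (hdeg ▸ card_roots' _) ?_
  have := card_roots_le_derivative (s.map (X - C ·)).prod
  rw [roots_multiset_prod_X_sub_C] at this
  exact Nat.sub_le_of_le_add this

lemma card_mul_esymm_derivativeRoots {s : Multiset ℝ} {i m : ℕ} (hs : card s = i + m + 1) :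
    card s * s.derivativeRoots.esymm i = (m + 1) * s.esymm i := by
  set P := (s.map (X - C ·)).prod
  have hcard : card s.derivativeRoots = i + m := by rw [card_derivativeRoots, hs]; rfl
  have hsplit : C (card s : ℝ) * (s.derivativeRoots.map (X - C ·)).prod = derivative P := by
    have hlead : (derivative P).leadingCoeff = card s := by
      have hmonic : P.Monic := monic_multiset_prod_of_monic _ _ fun a _ => monic_X_sub_C a
      rw [leadingCoeff_derivative, hmonic.leadingCoeff, natDegree_multiset_prod_X_sub_C_eq_card,
        one_mul]
    rw [← hlead]
    refine C_leadingCoeff_mul_prod_multiset_X_sub_C ?_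
    rw [natDegree_derivative, natDegree_multiset_prod_X_sub_C_eq_card]
    exact card_derivativeRoots s
  have hcoeff := congrArg (coeff · m) hsplit
  simp only [coeff_C_mul, coeff_derivative, P, prod_X_sub_C_coeff _ (hcard ▸ m.le_add_left i),
    prod_X_sub_C_coeff _ (by omega : m + 1 ≤ card s), hcard, hs] at hcoeff
  rw [show i + m - m = i by omega, show i + m + 1 - (m + 1) = i by omega] at hcoeff
  refine mul_left_cancel₀ (pow_ne_zero i (neg_ne_zero.2 one_ne_zero) : (-1 : ℝ) ^ i ≠ 0) ?_
  rw [hs]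
  push_cast at hcoeff ⊢
  linear_combination hcoeff

lemma esymmMean_derivativeRoots {s : Multiset ℝ} {i : ℕ} (hi : i < card s) :
    s.derivativeRoots.esymmMean i = s.esymmMean i := by
  obtain ⟨m, hm⟩ : ∃ m, card s = i + m + 1 := ⟨card s - i - 1, by omega⟩
  have hchoose : ((i + m).choose i : ℝ) * (i + m + 1) = (i + m + 1).choose i * (m + 1) := by
    have := Nat.choose_mul_succ_eq (i + m) i
    rw [show i + m + 1 - i = m + 1 by omega] at this
    exact_mod_cast this
  have hpos : (0 : ℝ) < (i + m).choose i := by exact_mod_cast Nat.choose_pos (by omega)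
  rw [esymmMean, esymmMean, card_derivativeRoots, hm, show i + m + 1 - 1 = i + m from rfl,
    div_eq_div_iff hpos.ne' (Nat.cast_ne_zero.2 (Nat.choose_pos (by omega)).ne')]
  have := card_mul_esymm_derivativeRoots hm
  rw [hm] at this
  push_cast at this
  refine mul_right_cancel₀ (by positivity : (m + 1 : ℝ) ≠ 0) ?_
  linear_combination ((i + m).choose i : ℝ) * this - s.derivativeRoots.esymm i * hchoose

lemma esymmMean_mul_esymmMean_le_sq_of_card_eq {s : Multiset ℝ} {j : ℕ} (hs : card s = j + 2) :
    s.esymmMean j * s.esymmMean (j + 2) ≤ s.esymmMean (j + 1) ^ 2 := by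
  have hbase : 2 * (j + 2) * (s.esymm j * s.esymm (j + 2)) ≤ (j + 1) * s.esymm (j + 1) ^ 2 := by
    obtain ⟨f, hf⟩ := s.exists_map_univ_val_eq
    rw [← hf]
    exact Fintype.two_mul_card_mul_esymm_mul_esymm_le (by rw [Fintype.card_fin, hs]) f
  have hchoose : ((j + 2).choose j : ℝ) = (j + 2) * (j + 1) / 2 := by
    rw [Nat.choose_symm_add, Nat.cast_choose_two]
    push_cast
    ring
  rw [esymmMean, esymmMean, esymmMean, hs, Nat.choose_self, Nat.choose_succ_self_right, hchoose]
  rw [div_pow, div_mul_div_comm, div_le_div_iff₀ (by positivity) (by positivity)]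
  push_cast
  nlinarith [hbase]

theorem esymmMean_mul_esymmMean_le_sq {s : Multiset ℝ} {j : ℕ} (h : j + 2 ≤ card s) :
    s.esymmMean j * s.esymmMean (j + 2) ≤ s.esymmMean (j + 1) ^ 2 := by
  obtain ⟨d, hd⟩ := Nat.exists_eq_add_of_le h
  induction d generalizing s with
  | zero => exact esymmMean_mul_esymmMean_le_sq_of_card_eq hd
  | succ d ih =>
    have hmean : ∀ i ≤ j + 2, s.derivativeRoots.esymmMean i = s.esymmMean i :=
      fun i hi => esymmMean_derivativeRoots (by omega)
    have hcard : card s.derivativeRoots = j + 2 + d := by rw [card_derivativeRoots, hd]; rfl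
    rw [← hmean j (by omega), ← hmean (j + 1) (by omega), ← hmean (j + 2) le_rfl]
    exact ih (by omega) hcard

theorem esymmMean_succ_le_mul {s : Multiset ℝ} {k : ℕ} (hk : k + 1 ≤ card s)
    (hpos : ∀ j, 1 ≤ j → j ≤ k → 0 < s.esymm j) :
    s.esymmMean (k + 1) ≤ s.esymmMean 1 * s.esymmMean k := by
  have h := mul_succ_le_mul_of_mul_le_sq (p := s.esymmMean) (k := k) (fun j hj => ?_)
    (fun j hj => esymmMean_mul_esymmMean_le_sq (by omega))
  · rwa [esymmMean_zero, one_mul] at h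
  rcases j.eq_zero_or_pos with rfl | hj0
  · exact (esymmMean_zero s).symm ▸ one_pos
  · exact div_pos (hpos j hj0 hj) (Nat.cast_pos.2 (Nat.choose_pos (by omega)))

theorem esymm_succ_le_mul {s : Multiset ℝ} {k : ℕ} (hk : k + 1 ≤ card s)
    (hpos : ∀ j, 1 ≤ j → j ≤ k → 0 < s.esymm j) :
    s.esymm (k + 1) ≤ ((card s : ℝ) - k) / (card s * (k + 1)) * s.esymm k * s.esymm 1 := by
  have h := esymmMean_succ_le_mul hk hpos
  have hpascal : ((card s).choose (k + 1) : ℝ) * (k + 1) = (card s).choose k * (card s - k) := by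
    have := congrArg (Nat.cast (R := ℝ)) (Nat.choose_succ_right_eq (card s) k)
    push_cast [Nat.cast_sub (by omega : k ≤ card s)] at this
    exact this
  have hchoose : (0 : ℝ) < (card s).choose k := Nat.cast_pos.2 (Nat.choose_pos (by omega))
  have hcard : (card s : ℝ) ≠ 0 := Nat.cast_ne_zero.2 (by omega)
  rw [esymmMean, esymmMean, esymmMean, Nat.choose_one_right,
    div_le_iff₀ (Nat.cast_pos.2 (Nat.choose_pos hk))] at h
  refine h.trans_eq ?_
  field_simp
  linear_combination (s.esymm 1 * s.esymm k) * hpascal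

end Multiset

lemma sigmaH_eq_esymm {n : ℕ} {A : Matrix (Fin n) (Fin n) ℂ} (hA : A.IsHermitian) (k : ℕ) :
    sigmaH hA k = (univ.val.map hA.eigenvalues).esymm k :=
  (esymm_map_val hA.eigenvalues univ k).symm

theorem sigmaH_newton_inequality_general {n : ℕ} (k : ℕ) (hk : k + 1 ≤ n)
    (A : Matrix (Fin n) (Fin n) ℂ) (hA : A.IsHermitian)
    (hAk : ∀ j, 1 ≤ j → j ≤ k → 0 < sigmaH hA j) :
    sigmaH hA (k + 1) ≤
      ((n : ℝ) - k) / ((n : ℝ) * (k + 1)) * sigmaH hA k * sigmaH hA 1 := by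
  simp only [sigmaH_eq_esymm] at hAk ⊢
  simpa using Multiset.esymm_succ_le_mul (s := univ.val.map hA.eigenvalues) (by simpa using hk) hAk

/-- Newton-type inequality: for a Hermitian matrix `A ∈ Γ_k^+` with `1 ≤ k ≤ n - 1`,
`σ_{k+1}(A) ≤ ((n-k)/(n(k+1))) σ_k(A) σ_1(A)`. -/
theorem sigmaH_newton_inequality {n : ℕ} (k : ℕ) (hk1 : 1 ≤ k) (hk : k + 1 ≤ n)
    (A : Matrix (Fin n) (Fin n) ℂ) (hA : A.IsHermitian)
    (hAk : ∀ j, 1 ≤ j → j ≤ k → 0 < sigmaH hA j) :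
    sigmaH hA (k + 1) ≤
      ((n : ℝ) - k) / ((n : ℝ) * (k + 1)) * sigmaH hA k * sigmaH hA 1 :=
  sigmaH_newton_inequality_general k hk A hA hAk
end
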